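/- For each odd integer n ≥ 5 there exists a finite set S of binary words, each of length at most n, such that S* is co-finite in {0,1}* and the longest word not in S* has length Ω(n² · 2^{n/2}); specifically, taking m = (n+1)/2 the longest omitted word has length m·l − m − l with l = m·2^{n−m} + (n−m). -/

import Mathlib

/-!
Write `n = 2t + 1`. The generators are all words of length `t + 1` together with the "bad
windows" `x a y` of length `2t + 1` (`|x| = |y| = t`) in which `y` is not the binary successor
of `x`.

Every word of length at least `l = (t + 1)·2^t + t` has a bad window starting at some position
`j(t + 1)` with `j < 2^t`: otherwise the `t`-blocks at these positions would count
`0, 1, …, 2^t` in binary. Peeling off such windows, every word whose length lies in the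
numerical semigroup `⟨t + 1, l⟩` factors over the generators.

Conversely, consider the periodic word with period
`bin 0 · 0 · bin 1 · 0 ⋯ bin (2^t - 1) · 0 · bin 0`. In it a bad window starting at position
`a(t + 1) + b·l` needs `a + 1 ≥ 2^t`, and then ends at a position of the same form; so every
factorisable prefix has length in `⟨t + 1, l⟩`. Its prefix whose length is the Frobenius number
`(t + 1)·l - (t + 1) - l` of `⟨t + 1, l⟩` is therefore omitted, and it is the longest omitted
word.
-/

open Computability

namespace Language

variable {α : Type*} {l : Language α} {x y w : List α}

theorem append_mem_kstar (hx : x ∈ l∗) (hy : y ∈ l∗) : x ++ y ∈ l∗ :=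
  kstar_mul_kstar l ▸ append_mem_mul hx hy

theorem mem_kstar_of_length_eq_mul {c d : ℕ} (hl : ∀ v : List α, v.length = d → v ∈ l)
    (hw : w.length = c * d) : w ∈ l∗ := by
  induction c generalizing w with
  | zero =>
    rw [List.length_eq_zero_iff.1 (by simpa using hw : w.length = 0)]
    exact nil_mem_kstar l
  | succ c ih =>
    rw [← List.take_append_drop d w]
    exact append_mem_kstar (le_kstar (a := l) (hl _ (by simp [hw, add_mul])))
      (ih (by simp [hw, add_mul]))

theorem prefix_induction_of_mem_kstar {P : List α → Prop} (hw : w ∈ l∗) (nil : P [])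
    (append : ∀ u v, v ∈ l → u ++ v <+: w → P u → P (u ++ v)) : P w := by
  obtain ⟨L, rfl, hL⟩ := mem_kstar.1 hw
  suffices ∀ L' : List (List α), L' <+: L → P L'.flatten from this L (List.prefix_refl L)
  intro L' hL'
  induction L' using List.reverseRecOn with
  | nil => exact nil
  | append_singleton L' v ih =>
    rw [List.flatten_append, List.flatten_singleton]
    exact append _ _ (hL v (hL'.subset (by simp)))
      (by simpa using List.IsPrefix.flatten hL') (ih ((List.prefix_append _ _).trans hL'))

end Language

namespace BinaryCounter

/-- The value of a word read as a binary numeral, least significant digit first. -/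
def binVal (w : List (Fin 2)) : ℕ := Nat.ofDigits 2 (w.map Fin.val)

lemma binVal_lt (w : List (Fin 2)) : binVal w < 2 ^ w.length := by
  simpa [binVal] using Nat.ofDigits_lt_base_pow_length one_lt_two (l := w.map Fin.val)
    (by simp only [List.mem_map]; rintro _ ⟨b, -, rfl⟩; exact b.is_lt)

def binWord (t j : ℕ) : List (Fin 2) :=
  List.ofFn fun r : Fin t => ⟨j / 2 ^ (r : ℕ) % 2, Nat.mod_lt _ two_pos⟩

@[simp] lemma length_binWord (t j : ℕ) : (binWord t j).length = t := List.length_ofFn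

lemma binVal_binWord (t j : ℕ) : binVal (binWord t j) = j % 2 ^ t := by
  induction t generalizing j with
  | zero => simp [binVal, binWord, Nat.mod_one]
  | succ t ih =>
    have h := ih (j / 2)
    simp only [binVal, binWord, List.ofFn_succ, List.map_cons, Nat.ofDigits_cons] at h ⊢
    simp only [Fin.val_zero, pow_zero, Nat.div_one, Fin.val_succ, pow_succ',
      ← Nat.div_div_eq_div_mul]
    rw [h, Nat.mod_mul]

def counterLength (t : ℕ) : ℕ := (t + 1) * 2 ^ t + t

lemma coprime_counterLength (t : ℕ) : Nat.Coprime (t + 1) (counterLength t) := by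
  rw [counterLength, Nat.coprime_mul_left_add_right]
  exact Nat.coprime_self_add_left.2 (Nat.coprime_one_left t)

lemma frobeniusNumber_counterLength {t : ℕ} (ht : 1 ≤ t) :
    FrobeniusNumber ((t + 1) * counterLength t - (t + 1) - counterLength t)
      {t + 1, counterLength t} :=
  frobeniusNumber_pair (coprime_counterLength t) (by omega)
    (by unfold counterLength; nlinarith [Nat.one_le_two_pow (n := t)])

def badWindows (t : ℕ) : Language (Fin 2) :=
  {w | w.length = 2 * t + 1 ∧ binVal (w.drop (t + 1)) ≠ binVal (w.take t) + 1}

def generators (t : ℕ) : Language (Fin 2) := {w | w.length = t + 1 ∨ w ∈ badWindows t}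

lemma length_le_of_mem_generators {t : ℕ} {w : List (Fin 2)} (hw : w ∈ generators t) :
    w.length ≤ 2 * t + 1 := by
  rcases hw with hw | hw
  · omega
  · exact hw.1.le

lemma take_drop_mem_badWindows_iff {t p : ℕ} {w : List (Fin 2)} :
    (w.drop p).take (2 * t + 1) ∈ badWindows t ↔ p + (2 * t + 1) ≤ w.length ∧
      binVal ((w.drop (p + (t + 1))).take t) ≠ binVal ((w.drop p).take t) + 1 := by
  change ((w.drop p).take (2 * t + 1)).length = 2 * t + 1 ∧ _ ↔ _
  simp only [List.length_take, List.length_drop, List.take_take, List.drop_take, List.drop_drop]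
  rw [min_eq_left (by omega : t ≤ 2 * t + 1), show 2 * t + 1 - (t + 1) = t by omega]
  exact and_congr_left' (by omega)

lemma exists_take_drop_mem_badWindows {t : ℕ} {w : List (Fin 2)}
    (hw : counterLength t ≤ w.length) :
    ∃ j < 2 ^ t, (w.drop (j * (t + 1))).take (2 * t + 1) ∈ badWindows t := by
  by_contra! h
  have hcount : ∀ j ≤ 2 ^ t, j ≤ binVal ((w.drop (j * (t + 1))).take t) := by
    intro j
    induction j with
    | zero => simp
    | succ j ih =>
      intro hj
      have hfit : j * (t + 1) + (2 * t + 1) ≤ w.length := by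
        unfold counterLength at hw; nlinarith
      have hstep := h j (by omega)
      rw [take_drop_mem_badWindows_iff, not_and, not_not] at hstep
      rw [show (j + 1) * (t + 1) = j * (t + 1) + (t + 1) by ring, hstep hfit]
      exact Nat.succ_le_succ (ih (by omega))
  have hlt := binVal_lt ((w.drop (2 ^ t * (t + 1))).take t)
  rw [List.length_take, List.length_drop,
    min_eq_left (by unfold counterLength at hw; rw [mul_comm]; omega)] at hlt
  exact absurd (hcount _ le_rfl) (by omega)

lemma mem_kstar_generators {t a b : ℕ} {w : List (Fin 2)}
    (hw : w.length = a * (t + 1) + b * counterLength t) : w ∈ (generators t)∗ := by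
  induction b generalizing a w with
  | zero => exact Language.mem_kstar_of_length_eq_mul (fun _ => Or.inl) (by simpa using hw)
  | succ b ih =>
    obtain ⟨j, hj, hbad⟩ :=
      exists_take_drop_mem_badWindows (w := w) (by rw [hw]; nlinarith)
    obtain ⟨e, he⟩ : ∃ e, 2 ^ t = j + 1 + e := ⟨2 ^ t - (j + 1), by omega⟩
    have hlen : w.length =
        j * (t + 1) + ((2 * t + 1) + ((a + e) * (t + 1) + b * counterLength t)) := by
      rw [hw, counterLength, he]; ring
    rw [← List.take_append_drop (j * (t + 1)) w,
      ← List.take_append_drop (2 * t + 1) (w.drop (j * (t + 1)))]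
    refine Language.append_mem_kstar
      (Language.mem_kstar_of_length_eq_mul (fun _ => Or.inl) (c := j)
        (by rw [List.length_take]; omega))
      (Language.append_mem_kstar (le_kstar (a := generators t) (Or.inr hbad))
        (ih (a := a + e) ?_))
    simp only [List.length_drop]
    omega

/-- Letter `p` of the periodic word with period
`bin 0 · 0 · bin 1 · 0 ⋯ bin (2^t - 1) · 0 · bin 0`: position `q` of a period lies in block
`q / (t + 1)` at offset `q % (t + 1)`, and the letter is that bit of the block index. The bit
is `0` on the separators (offset `t`, index `< 2^t`) and on the closing block (index `2^t`). -/
def counterLetter (t p : ℕ) : Fin 2 :=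
  let q := p % counterLength t
  ⟨q / (t + 1) / 2 ^ (q % (t + 1)) % 2, Nat.mod_lt _ two_pos⟩

def counterWord (t N : ℕ) : List (Fin 2) := List.ofFn fun p : Fin N => counterLetter t p

@[simp] lemma length_counterWord (t N : ℕ) : (counterWord t N).length = N := List.length_ofFn

lemma take_drop_counterWord {t N p j : ℕ} (hp : p % counterLength t = j * (t + 1))
    (hj : j ≤ 2 ^ t) (hN : p + t ≤ N) : ((counterWord t N).drop p).take t = binWord t j := by
  refine List.ext_getElem ?_ fun r hr _ => ?_
  · simp only [List.length_take, List.length_drop, length_counterWord, length_binWord]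
    omega
  have hr : r < t := by rwa [length_binWord] at *
  have hq : (p + r) % counterLength t = j * (t + 1) + r := by
    have : j * (t + 1) + r < counterLength t := by
      unfold counterLength; nlinarith
    rw [Nat.add_mod, hp, Nat.mod_eq_of_lt (a := r) (by omega), Nat.mod_eq_of_lt this]
  have hdiv : (j * (t + 1) + r) / (t + 1) = j := by
    rw [add_comm, Nat.add_mul_div_right _ _ (Nat.succ_pos t), Nat.div_eq_of_lt (by omega), zero_add]
  have hmod : (j * (t + 1) + r) % (t + 1) = r := by
    rw [add_comm, Nat.add_mul_mod_self_right, Nat.mod_eq_of_lt (by omega)]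
  simp [counterWord, binWord, counterLetter, hq, hdiv, hmod]

lemma add_mem_closure_of_take_drop_counterWord_mem_badWindows {t N p : ℕ}
    (hp : p ∈ AddSubmonoid.closure {t + 1, counterLength t})
    (hbad : ((counterWord t N).drop p).take (2 * t + 1) ∈ badWindows t) :
    p + (2 * t + 1) ∈ AddSubmonoid.closure {t + 1, counterLength t} := by
  obtain ⟨a, b, hab⟩ := (AddSubmonoid.mem_closure_pair _ _ _).1 hp
  simp only [smul_eq_mul] at hab
  obtain ⟨hfit, hne⟩ := take_drop_mem_badWindows_iff.1 hbad
  rw [length_counterWord] at hfit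
  by_cases ha : a + 1 < 2 ^ t
  · have hpos : ∀ k ≤ 1, (p + k * (t + 1)) % counterLength t = (a + k) * (t + 1) := by
      intro k hk
      rw [← hab, add_right_comm, ← add_mul, Nat.add_mul_mod_self_right,
        Nat.mod_eq_of_lt (by unfold counterLength; nlinarith)]
    rw [take_drop_counterWord (p := p) (j := a) (by simpa using hpos 0 (by omega)) (by omega)
        (by omega),
      take_drop_counterWord (j := a + 1) (by simpa using hpos 1 le_rfl) ha.le (by omega),
      binVal_binWord, binVal_binWord, Nat.mod_eq_of_lt ha, Nat.mod_eq_of_lt (by omega)] at hne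
    exact absurd rfl hne
  · obtain ⟨e, he⟩ : ∃ e, a + 1 = 2 ^ t + e := ⟨a + 1 - 2 ^ t, by omega⟩
    refine (AddSubmonoid.mem_closure_pair _ _ _).2 ⟨e, b + 1, ?_⟩
    have : (a + 1) * (t + 1) = (2 ^ t + e) * (t + 1) := by rw [he]
    simp only [smul_eq_mul, ← hab, counterLength]
    nlinarith

lemma length_mem_closure_of_counterWord_mem_kstar {t N : ℕ}
    (h : counterWord t N ∈ (generators t)∗) :
    N ∈ AddSubmonoid.closure {t + 1, counterLength t} := by
  simpa using Language.prefix_induction_of_mem_kstar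
    (P := fun u => u.length ∈ AddSubmonoid.closure {t + 1, counterLength t}) h (by simp)
    fun u v hv hpre hu => by
      rw [List.length_append]
      rcases hv with hv | hv
      · exact add_mem hu (AddSubmonoid.subset_closure (by simp [hv]))
      obtain ⟨s, hs⟩ := hpre
      have hv' : v = ((counterWord t N).drop u.length).take (2 * t + 1) := by
        rw [← hv.1, ← hs, List.append_assoc, List.drop_left, List.take_left]
      rw [hv.1]
      exact add_mem_closure_of_take_drop_counterWord_mem_badWindows hu (hv' ▸ hv)

end BinaryCounter

open BinaryCounter

/-- For each odd `n ≥ 5` there is a finite set `S` of binary words of length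
at most `n` such that `S∗` is co-finite and the longest word not in `S∗` has length
`m·l − m − l`, where `m = (n+1)/2` and `l = m·2^{n−m} + (n−m)` (which is `Ω(n²·2^{n/2})`). -/
theorem longest_omitted_lower_bound_binary (n : ℕ) (h5 : 5 ≤ n) (hodd : Odd n)
    (m l : ℕ) (hm : m = (n + 1) / 2) (hl : l = m * 2 ^ (n - m) + (n - m)) :
    ∃ S : Language (Fin 2), S.Finite ∧ (∀ w ∈ S, w.length ≤ n) ∧
      Set.Finite ((S∗ : Language (Fin 2))ᶜ) ∧
      IsGreatest {len : ℕ | ∃ w : List (Fin 2), w ∉ S∗ ∧ w.length = len}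
        (m * l - m - l) := by
  obtain ⟨t, rfl⟩ := hodd
  obtain rfl : m = t + 1 := by omega
  obtain rfl : l = counterLength t := by
    rw [hl, counterLength, show 2 * t + 1 - (t + 1) = t by omega]
  obtain ⟨hnotin, hin⟩ :=
    frobeniusNumber_iff.1 (frobeniusNumber_counterLength (t := t) (by omega))
  have homitted (w : List (Fin 2)) (hw : w ∉ (generators t)∗) :
      w.length ≤ (t + 1) * counterLength t - (t + 1) - counterLength t := by
    by_contra! hlt
    obtain ⟨a, b, hab⟩ := (AddSubmonoid.mem_closure_pair _ _ _).1 (hin _ hlt)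
    exact hw (mem_kstar_generators (by simpa using hab.symm))
  refine ⟨generators t, ?_, fun w hw => length_le_of_mem_generators hw, ?_, ?_, ?_⟩
  · exact (List.finite_length_le _ (2 * t + 1)).subset fun w => length_le_of_mem_generators
  · exact (List.finite_length_le _ _).subset homitted
  · exact ⟨counterWord t _, fun h => hnotin (length_mem_closure_of_counterWord_mem_kstar h),
      length_counterWord _ _⟩
  · rintro _ ⟨w, hw, rfl⟩
    exact homitted w hw
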